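/- arXiv:1103.1168 — 3 statements merged into one kernel-verified Lean document; each statement's English description precedes it below -/
import Mathlib

section
/- Let (X̂, Ŷ, Ẑ, Û, V̂, Λ̂, Π̂) satisfy: (X̂Ŷ − Ẑ)Ŷ^T + Λ̂ = 0, X̂^T(X̂Ŷ − Ẑ) + Π̂ = 0, P_{Ω^c}(X̂Ŷ − Ẑ) = 0, P_Ω(Ẑ − M) = 0, X̂ = Û ≥ 0, Ŷ = V̂ ≥ 0, P₊(X̂ + Λ̂/α) = Û, and P₊(Ŷ + Π̂/β) = V̂. Then (X̂, Ŷ, Ẑ, Û, V̂) together with (Λ̂, Π̂) satisfies the full KKT conditions for the NMFC problem min{(1/2)‖XY−Z‖_F² : X=U, Y=V, U≥0, V≥0, P_Ω(Z−M)=0}; in particular Λ̂ ≤ 0, Π̂ ≤ 0, Λ̂ ⊙ Û = 0, and Π̂ ⊙ V̂ = 0. -/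
open Matrix

/-- Projection onto entries in Ω. -/
def projOmega {m n : ℕ} (Ω : Finset (Fin m × Fin n)) (A : Matrix (Fin m) (Fin n) ℝ) :
    Matrix (Fin m) (Fin n) ℝ :=
  fun i j => if (i, j) ∈ Ω then A i j else 0

/-- Projection onto entries in the complement of Ω. -/
def projOmegaC {m n : ℕ} (Ω : Finset (Fin m × Fin n)) (A : Matrix (Fin m) (Fin n) ℝ) :
    Matrix (Fin m) (Fin n) ℝ :=
  fun i j => if (i, j) ∈ Ω then 0 else A i j

/-!
Only the sign and complementarity conditions are new. Entrywise, `P₊(x + λ/α) = u` together with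
`x = u` says that `u` is a fixed point of the projected step `u ↦ max (u + λ/α) 0`, and such a
fixed point satisfies `u ≥ 0`, `λ ≤ 0` and `λ u = 0`.
-/

theorem max_add_zero_eq_self_iff {R : Type*} [Ring R] [LinearOrder R] [IsStrictOrderedRing R]
    {u t : R} :
    max (u + t) 0 = u ↔ 0 ≤ u ∧ t ≤ 0 ∧ t * u = 0 := by
  constructor
  · intro h
    rcases le_total 0 (u + t) with hut | hut
    · rw [max_eq_left hut] at h
      obtain rfl : t = 0 := add_eq_left.mp h
      exact ⟨h ▸ hut, le_rfl, zero_mul u⟩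
    · rw [max_eq_right hut] at h
      subst h
      exact ⟨le_rfl, by simpa using hut, mul_zero t⟩
  · rintro ⟨hu, ht, htu⟩
    rcases mul_eq_zero.mp htu with rfl | rfl
    · rw [add_zero, max_eq_left hu]
    · rw [zero_add, max_eq_right ht]

theorem complementarity_of_max_add_div_eq_self {𝕜 : Type*} [Field 𝕜] [LinearOrder 𝕜]
    [IsStrictOrderedRing 𝕜] {u l a : 𝕜} (ha : 0 < a)
    (h : max (u + l / a) 0 = u) : 0 ≤ u ∧ l ≤ 0 ∧ l * u = 0 := by
  obtain ⟨hu, hl, hlu⟩ := max_add_zero_eq_self_iff.mp h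
  refine ⟨hu, ?_, ?_⟩
  · simpa using (div_le_iff₀ ha).mp hl
  · rwa [div_mul_eq_mul_div, div_eq_zero_iff, or_iff_left ha.ne'] at hlu

theorem limit_point_satisfies_KKT_general {m q n : ℕ} (Ω : Finset (Fin m × Fin n))
    (α β : ℝ) (hα : 0 < α) (hβ : 0 < β)
    (X U Λ : Matrix (Fin m) (Fin q) ℝ)
    (Y V Pm : Matrix (Fin q) (Fin n) ℝ)
    (Z M : Matrix (Fin m) (Fin n) ℝ)
    (h1 : (X * Y - Z) * Yᵀ + Λ = 0)
    (h2 : Xᵀ * (X * Y - Z) + Pm = 0)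
    (h3 : projOmegaC Ω (X * Y - Z) = 0)
    (h4 : projOmega Ω (Z - M) = 0)
    (h5 : X = U)
    (h6 : Y = V)
    (h7 : ∀ i j, max (X i j + Λ i j / α) 0 = U i j)
    (h8 : ∀ i j, max (Y i j + Pm i j / β) 0 = V i j) :
    (X * Y - Z) * Yᵀ + Λ = 0 ∧
    Xᵀ * (X * Y - Z) + Pm = 0 ∧
    projOmegaC Ω (X * Y - Z) = 0 ∧
    projOmega Ω (Z - M) = 0 ∧
    X - U = 0 ∧ Y - V = 0 ∧
    (∀ i j, Λ i j ≤ 0) ∧ (∀ i j, 0 ≤ U i j) ∧ (∀ i j, Λ i j * U i j = 0) ∧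
    (∀ i j, Pm i j ≤ 0) ∧ (∀ i j, 0 ≤ V i j) ∧ (∀ i j, Pm i j * V i j = 0) := by
  subst h5 h6
  have hΛ := fun i j => complementarity_of_max_add_div_eq_self hα (h7 i j)
  have hPm := fun i j => complementarity_of_max_add_div_eq_self hβ (h8 i j)
  exact ⟨h1, h2, h3, h4, sub_self X, sub_self Y,
    fun i j => (hΛ i j).2.1, fun i j => (hΛ i j).1, fun i j => (hΛ i j).2.2,
    fun i j => (hPm i j).2.1, fun i j => (hPm i j).1, fun i j => (hPm i j).2.2⟩

theorem limit_point_satisfies_KKT {m q n : ℕ} (Ω : Finset (Fin m × Fin n))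
    (α β : ℝ) (hα : 0 < α) (hβ : 0 < β)
    (X U Λ : Matrix (Fin m) (Fin q) ℝ)
    (Y V Pm : Matrix (Fin q) (Fin n) ℝ)
    (Z M : Matrix (Fin m) (Fin n) ℝ)
    (h1 : (X * Y - Z) * Yᵀ + Λ = 0)
    (h2 : Xᵀ * (X * Y - Z) + Pm = 0)
    (h3 : projOmegaC Ω (X * Y - Z) = 0)
    (h4 : projOmega Ω (Z - M) = 0)
    (h5 : X = U) (h5' : ∀ i j, 0 ≤ U i j)
    (h6 : Y = V) (h6' : ∀ i j, 0 ≤ V i j)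
    (h7 : ∀ i j, max (X i j + Λ i j / α) 0 = U i j)
    (h8 : ∀ i j, max (Y i j + Pm i j / β) 0 = V i j) :
    (X * Y - Z) * Yᵀ + Λ = 0 ∧
    Xᵀ * (X * Y - Z) + Pm = 0 ∧
    projOmegaC Ω (X * Y - Z) = 0 ∧
    projOmega Ω (Z - M) = 0 ∧
    X - U = 0 ∧ Y - V = 0 ∧
    (∀ i j, Λ i j ≤ 0) ∧ (∀ i j, 0 ≤ U i j) ∧ (∀ i j, Λ i j * U i j = 0) ∧
    (∀ i j, Pm i j ≤ 0) ∧ (∀ i j, 0 ≤ V i j) ∧ (∀ i j, Pm i j * V i j = 0) :=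
  limit_point_satisfies_KKT_general Ω α β hα hβ X U Λ Y V Pm Z M h1 h2 h3 h4 h5 h6 h7 h8
end

section
/- Suppose the sequence (W_k, Λ_k, Λ_k) generated by the ADM updates X_{k+1} = (Z_k Y_k^T + αU_k − Λ_k)(Y_k Y_k^T + αI)^{-1}, Y_{k+1} = (X_{k+1}^T X_{k+1} + βI)^{-1}(X_{k+1}^T Z_k + βV_k − Π_k), Z_{k+1} = X_{k+1}Y_{k+1} + P_Ω(M − X_{k+1}Y_{k+1}), U_{k+1} = P₊(X_{k+1} + Λ_k/α), V_{k+1} = P₊(Y_{k+1} + Π_k/β), Λ_{k+1} = Λ_k + γα(X_{k+1} − U_{k+1}), Π_{k+1} = Π_k + γβ(Y_{k+1} − V_{k+1}), converges to a limit (Ŵ, Λ̂, Π̂). Then the limit satisfies the KKT conditions of the NMFC problem: (X̂Ŷ−Ẑ)Ŷ^T + Λ̂ = 0, X̂^T(X̂Ŷ−Ẑ) + Π̂ = 0, P_{Ω^c}(X̂Ŷ−Ẑ) = 0, P_Ω(Ẑ−M) = 0, X̂ = Û, Ŷ = V̂, Λ̂ ≤ 0 ≤ Û with Λ̂⊙Û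 = 0, and Π̂ ≤ 0 ≤ V̂ with Π̂⊙V̂ = 0. -/
/-!
Once the X- and Y-updates are multiplied through by the positive definite, hence invertible,
matrices `Y Yᵀ + α I` and `Xᵀ X + β I`, every update equation is continuous in the iterates, so the
limit satisfies them all. At the limit the multiplier updates force `X̂ = Û` and `Ŷ = V̂`
(as `γ α, γ β ≠ 0`); the X-, Y- and Z-equations then become the stationarity and projection
conditions, and the fixed point `Û = P₊(Û + Λ̂ / α)` is exactly the sign and complementarity
condition between `Λ̂` and `Û` (likewise for `Π̂` and `V̂`).
-/

open Matrix Filter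

/-- Entrywise max with 0. -/
def projPlus {m q : ℕ} (A : Matrix (Fin m) (Fin q) ℝ) : Matrix (Fin m) (Fin q) ℝ :=
  fun i j => max (A i j) 0

open scoped Topology

section Limits

variable {ι R : Type*} {l : Filter ι} {m n p : Type*} [TopologicalSpace R]

theorem Filter.Tendsto.matrix_transpose {A : ι → Matrix m n R} {A₀ : Matrix m n R}
    (hA : Tendsto A l (𝓝 A₀)) : Tendsto (fun i => (A i)ᵀ) l (𝓝 A₀ᵀ) :=
  (continuous_id.matrix_transpose.tendsto A₀).comp hA

theorem Filter.Tendsto.matrix_mul [Fintype n] [Mul R] [AddCommMonoid R] [ContinuousAdd R]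
    [ContinuousMul R] {A : ι → Matrix m n R} {B : ι → Matrix n p R} {A₀ : Matrix m n R}
    {B₀ : Matrix n p R} (hA : Tendsto A l (𝓝 A₀)) (hB : Tendsto B l (𝓝 B₀)) :
    Tendsto (fun i => A i * B i) l (𝓝 (A₀ * B₀)) :=
  ((continuous_fst.matrix_mul continuous_snd).tendsto (A₀, B₀)).comp (hA.prodMk_nhds hB)

end Limits

theorem continuous_projPlus {m q : ℕ} : Continuous (projPlus : Matrix (Fin m) (Fin q) ℝ → _) :=
  continuous_pi fun i => continuous_pi fun j =>
    (continuous_id.matrix_elem i j).max continuous_const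

theorem continuous_projOmega {m n : ℕ} (Ω : Finset (Fin m × Fin n)) :
    Continuous (projOmega Ω) := by
  refine continuous_pi fun i => continuous_pi fun j => ?_
  simp only [projOmega]
  split_ifs
  · exact continuous_id.matrix_elem i j
  · exact continuous_const

theorem eq_of_tendsto_of_forall_succ_eq {E : Type*} [TopologicalSpace E] [T2Space E]
    {a f : ℕ → E} {a₀ b : E} (ha : Tendsto a atTop (𝓝 a₀)) (hf : Tendsto f atTop (𝓝 b))
    (h : ∀ k, a (k + 1) = f k) : a₀ = b :=
  tendsto_nhds_unique (((tendsto_add_atTop_iff_nat 1).2 ha).congr h) hf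

theorem eq_of_tendsto_of_multiplier_update {E : Type*} [AddCommGroup E] [Module ℝ E]
    [TopologicalSpace E] [IsTopologicalAddGroup E] [ContinuousConstSMul ℝ E] [T2Space E]
    {c : ℝ} (hc : c ≠ 0) {L x u : ℕ → E} {L₀ x₀ u₀ : E} (hL : Tendsto L atTop (𝓝 L₀))
    (hx : Tendsto x atTop (𝓝 x₀)) (hu : Tendsto u atTop (𝓝 u₀))
    (h : ∀ k, L (k + 1) = L k + c • (x (k + 1) - u (k + 1))) : x₀ = u₀ := by
  have hlim : L₀ = L₀ + c • (x₀ - u₀) := eq_of_tendsto_of_forall_succ_eq hL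
    (hL.add ((((tendsto_add_atTop_iff_nat 1).2 hx).sub
      ((tendsto_add_atTop_iff_nat 1).2 hu)).const_smul c)) h
  simpa [sub_eq_zero, hc] using hlim

theorem isUnit_det_mul_transpose_add_smul_one {m n : Type*} [Fintype m] [DecidableEq m]
    [Fintype n] {α : ℝ} (hα : 0 < α) (A : Matrix m n ℝ) : IsUnit (A * Aᵀ + α • 1).det := by
  have hA : (A * Aᵀ).PosSemidef := by simpa using posSemidef_self_mul_conjTranspose A
  exact (PosDef.posSemidef_add hA (PosDef.one.smul hα)).det_pos.ne'.isUnit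

theorem sub_mul_add_eq_zero_of_mul_add_smul_one_eq {m n q R : Type*} [Fintype n] [Fintype q]
    [DecidableEq q] [CommRing R] {X Λ : Matrix m q R} {Y : Matrix q n R} {Z : Matrix m n R}
    {W : Matrix n q R} {α : R} (h : X * (Y * W + α • 1) = Z * W + α • X - Λ) :
    (X * Y - Z) * W + Λ = 0 := by
  rw [Matrix.mul_add, Matrix.mul_smul, Matrix.mul_one, ← Matrix.mul_assoc, add_sub_right_comm,
    add_left_inj] at h
  rw [Matrix.sub_mul, h]
  abel

theorem mul_sub_add_eq_zero_of_add_smul_one_mul_eq {m n q R : Type*} [Fintype m] [Fintype q]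
    [DecidableEq q] [CommRing R] {X : Matrix m q R} {Y P : Matrix q n R} {Z : Matrix m n R}
    {W : Matrix q m R} {β : R} (h : (W * X + β • 1) * Y = W * Z + β • Y - P) :
    W * (X * Y - Z) + P = 0 := by
  rw [Matrix.add_mul, Matrix.smul_mul, Matrix.one_mul, Matrix.mul_assoc, add_sub_right_comm,
    add_left_inj] at h
  rw [Matrix.mul_sub, h]
  abel

theorem projOmegaC_and_projOmega_eq_zero_of_eq_add_projOmega {m n : ℕ}
    {Ω : Finset (Fin m × Fin n)} {A B M : Matrix (Fin m) (Fin n) ℝ}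
    (h : B = A + projOmega Ω (M - A)) :
    projOmegaC Ω (A - B) = 0 ∧ projOmega Ω (B - M) = 0 := by
  subst h
  constructor <;> ext i j <;> by_cases hij : (i, j) ∈ Ω <;> simp [projOmega, projOmegaC, hij]

theorem nonpos_nonneg_mul_eq_zero_of_eq_max {t u l : ℝ} (ht : 0 < t)
    (h : u = max (u + t * l) 0) :
    l ≤ 0 ∧ 0 ≤ u ∧ l * u = 0 := by
  rcases le_or_gt (u + t * l) 0 with hle | hlt
  · rw [max_eq_right hle] at h
    subst h
    exact ⟨by nlinarith, le_rfl, mul_zero l⟩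
  · rw [max_eq_left hlt.le] at h
    have hl : l = 0 := by nlinarith
    exact ⟨hl.le, by linarith, by simp [hl]⟩

theorem complementarity_of_eq_projPlus {m q : ℕ} {c : ℝ} (hc : 0 < c)
    {U L : Matrix (Fin m) (Fin q) ℝ} (h : U = projPlus (U + c⁻¹ • L)) :
    (∀ i j, L i j ≤ 0) ∧ (∀ i j, 0 ≤ U i j) ∧ ∀ i j, L i j * U i j = 0 := by
  have hij (i j) : L i j ≤ 0 ∧ 0 ≤ U i j ∧ L i j * U i j = 0 :=
    nonpos_nonneg_mul_eq_zero_of_eq_max (inv_pos.2 hc) (congrFun (congrFun h i) j)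
  exact ⟨fun i j => (hij i j).1, fun i j => (hij i j).2.1, fun i j => (hij i j).2.2⟩

theorem ADM_convergent_limit_is_KKT_general {m q n : ℕ} (Ω : Finset (Fin m × Fin n))
    (α β γ : ℝ) (hα : 0 < α) (hβ : 0 < β) (hγ : 0 < γ)
    (M : Matrix (Fin m) (Fin n) ℝ)
    (X U Λ : ℕ → Matrix (Fin m) (Fin q) ℝ)
    (Y V Pm : ℕ → Matrix (Fin q) (Fin n) ℝ)
    (Z : ℕ → Matrix (Fin m) (Fin n) ℝ)
    (hX : ∀ k, X (k + 1) = (Z k * (Y k)ᵀ + α • U k - Λ k)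
        * (Y k * (Y k)ᵀ + α • (1 : Matrix (Fin q) (Fin q) ℝ))⁻¹)
    (hY : ∀ k, Y (k + 1) = ((X (k + 1))ᵀ * X (k + 1) + β • (1 : Matrix (Fin q) (Fin q) ℝ))⁻¹
        * ((X (k + 1))ᵀ * Z k + β • V k - Pm k))
    (hZ : ∀ k, Z (k + 1) = X (k + 1) * Y (k + 1) + projOmega Ω (M - X (k + 1) * Y (k + 1)))
    (hU : ∀ k, U (k + 1) = projPlus (X (k + 1) + α⁻¹ • Λ k))
    (hV : ∀ k, V (k + 1) = projPlus (Y (k + 1) + β⁻¹ • Pm k))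
    (hΛ : ∀ k, Λ (k + 1) = Λ k + (γ * α) • (X (k + 1) - U (k + 1)))
    (hPm : ∀ k, Pm (k + 1) = Pm k + (γ * β) • (Y (k + 1) - V (k + 1)))
    (Xh Uh Λh : Matrix (Fin m) (Fin q) ℝ)
    (Yh Vh Pmh : Matrix (Fin q) (Fin n) ℝ)
    (Zh : Matrix (Fin m) (Fin n) ℝ)
    (cX : Tendsto X atTop (nhds Xh)) (cY : Tendsto Y atTop (nhds Yh))
    (cZ : Tendsto Z atTop (nhds Zh)) (cU : Tendsto U atTop (nhds Uh))
    (cV : Tendsto V atTop (nhds Vh)) (cΛ : Tendsto Λ atTop (nhds Λh))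
    (cPm : Tendsto Pm atTop (nhds Pmh)) :
    (Xh * Yh - Zh) * Yhᵀ + Λh = 0 ∧
    Xhᵀ * (Xh * Yh - Zh) + Pmh = 0 ∧
    projOmegaC Ω (Xh * Yh - Zh) = 0 ∧
    projOmega Ω (Zh - M) = 0 ∧
    Xh = Uh ∧ Yh = Vh ∧
    (∀ i j, Λh i j ≤ 0) ∧ (∀ i j, 0 ≤ Uh i j) ∧ (∀ i j, Λh i j * Uh i j = 0) ∧
    (∀ i j, Pmh i j ≤ 0) ∧ (∀ i j, 0 ≤ Vh i j) ∧ (∀ i j, Pmh i j * Vh i j = 0) := by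
  have cX1 := (tendsto_add_atTop_iff_nat 1).2 cX
  have cY1 := (tendsto_add_atTop_iff_nat 1).2 cY
  have hXU : Xh = Uh := eq_of_tendsto_of_multiplier_update (mul_pos hγ hα).ne' cΛ cX cU hΛ
  have hYV : Yh = Vh := eq_of_tendsto_of_multiplier_update (mul_pos hγ hβ).ne' cPm cY cV hPm
  subst hXU hYV
  have hU_lim : Xh = projPlus (Xh + α⁻¹ • Λh) := eq_of_tendsto_of_forall_succ_eq cU
    ((continuous_projPlus.tendsto _).comp (cX1.add (cΛ.const_smul _))) hU
  have hV_lim : Yh = projPlus (Yh + β⁻¹ • Pmh) := eq_of_tendsto_of_forall_succ_eq cV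
    ((continuous_projPlus.tendsto _).comp (cY1.add (cPm.const_smul _))) hV
  have hZ_lim : Zh = Xh * Yh + projOmega Ω (M - Xh * Yh) := eq_of_tendsto_of_forall_succ_eq cZ
    ((cX1.matrix_mul cY1).add (((continuous_projOmega Ω).tendsto _).comp
      (tendsto_const_nhds.sub (cX1.matrix_mul cY1)))) hZ
  have hX_lim : Xh * (Yh * Yhᵀ + α • 1) = Zh * Yhᵀ + α • Xh - Λh := by
    refine tendsto_nhds_unique
      ((cX1.matrix_mul ((cY.matrix_mul cY.matrix_transpose).add_const _)).congr fun k => ?_)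
      (((cZ.matrix_mul cY.matrix_transpose).add (cU.const_smul α)).sub cΛ)
    rw [hX k]
    exact nonsing_inv_mul_cancel_right _ _ (isUnit_det_mul_transpose_add_smul_one hα _)
  have hY_lim : (Xhᵀ * Xh + β • 1) * Yh = Xhᵀ * Zh + β • Yh - Pmh := by
    refine tendsto_nhds_unique
      ((((cX1.matrix_transpose.matrix_mul cX1).add_const _).matrix_mul cY1).congr fun k => ?_)
      (((cX1.matrix_transpose.matrix_mul cZ).add (cV.const_smul β)).sub cPm)
    rw [hY k]
    refine mul_nonsing_inv_cancel_left _ _ ?_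
    simpa using isUnit_det_mul_transpose_add_smul_one hβ (X (k + 1))ᵀ
  obtain ⟨hΩc, hΩ⟩ := projOmegaC_and_projOmega_eq_zero_of_eq_add_projOmega hZ_lim
  obtain ⟨hΛ_nonpos, hU_nonneg, hΛU⟩ := complementarity_of_eq_projPlus hα hU_lim
  obtain ⟨hPm_nonpos, hV_nonneg, hPmV⟩ := complementarity_of_eq_projPlus hβ hV_lim
  exact ⟨sub_mul_add_eq_zero_of_mul_add_smul_one_eq hX_lim,
    mul_sub_add_eq_zero_of_add_smul_one_mul_eq hY_lim, hΩc, hΩ, rfl, rfl,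
    hΛ_nonpos, hU_nonneg, hΛU, hPm_nonpos, hV_nonneg, hPmV⟩

theorem ADM_convergent_limit_is_KKT {m q n : ℕ} (Ω : Finset (Fin m × Fin n))
    (α β γ : ℝ) (hα : 0 < α) (hβ : 0 < β) (hγ : 0 < γ) (hγ' : γ < 1.618)
    (M : Matrix (Fin m) (Fin n) ℝ)
    (X U Λ : ℕ → Matrix (Fin m) (Fin q) ℝ)
    (Y V Pm : ℕ → Matrix (Fin q) (Fin n) ℝ)
    (Z : ℕ → Matrix (Fin m) (Fin n) ℝ)
    (hX : ∀ k, X (k + 1) = (Z k * (Y k)ᵀ + α • U k - Λ k)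
        * (Y k * (Y k)ᵀ + α • (1 : Matrix (Fin q) (Fin q) ℝ))⁻¹)
    (hY : ∀ k, Y (k + 1) = ((X (k + 1))ᵀ * X (k + 1) + β • (1 : Matrix (Fin q) (Fin q) ℝ))⁻¹
        * ((X (k + 1))ᵀ * Z k + β • V k - Pm k))
    (hZ : ∀ k, Z (k + 1) = X (k + 1) * Y (k + 1) + projOmega Ω (M - X (k + 1) * Y (k + 1)))
    (hU : ∀ k, U (k + 1) = projPlus (X (k + 1) + α⁻¹ • Λ k))
    (hV : ∀ k, V (k + 1) = projPlus (Y (k + 1) + β⁻¹ • Pm k))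
    (hΛ : ∀ k, Λ (k + 1) = Λ k + (γ * α) • (X (k + 1) - U (k + 1)))
    (hPm : ∀ k, Pm (k + 1) = Pm k + (γ * β) • (Y (k + 1) - V (k + 1)))
    (Xh Uh Λh : Matrix (Fin m) (Fin q) ℝ)
    (Yh Vh Pmh : Matrix (Fin q) (Fin n) ℝ)
    (Zh : Matrix (Fin m) (Fin n) ℝ)
    (cX : Tendsto X atTop (nhds Xh)) (cY : Tendsto Y atTop (nhds Yh))
    (cZ : Tendsto Z atTop (nhds Zh)) (cU : Tendsto U atTop (nhds Uh))
    (cV : Tendsto V atTop (nhds Vh)) (cΛ : Tendsto Λ atTop (nhds Λh))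
    (cPm : Tendsto Pm atTop (nhds Pmh)) :
    (Xh * Yh - Zh) * Yhᵀ + Λh = 0 ∧
    Xhᵀ * (Xh * Yh - Zh) + Pmh = 0 ∧
    projOmegaC Ω (Xh * Yh - Zh) = 0 ∧
    projOmega Ω (Zh - M) = 0 ∧
    Xh = Uh ∧ Yh = Vh ∧
    (∀ i j, Λh i j ≤ 0) ∧ (∀ i j, 0 ≤ Uh i j) ∧ (∀ i j, Λh i j * Uh i j = 0) ∧
    (∀ i j, Pmh i j ≤ 0) ∧ (∀ i j, 0 ≤ Vh i j) ∧ (∀ i j, Pmh i j * Vh i j = 0) :=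
  ADM_convergent_limit_is_KKT_general Ω α β γ hα hβ hγ M X U Λ Y V Pm Z hX hY hZ hU hV hΛ hPm Xh Uh
    Λh Yh Vh Pmh Zh cX cY cZ cU cV cΛ cPm
end

section
/- If (X̂, Ŷ, Ẑ) satisfies (X̂Ŷ − Ẑ)Ŷ^T + Λ̂ = 0, X̂^T(X̂Ŷ − Ẑ) + Π̂ = 0, P_{Ω^c}(X̂Ŷ − Ẑ) = 0, P_Ω(Ẑ − M) = 0, X̂ ≥ 0, Ŷ ≥ 0, Λ̂ ≤ 0, Π̂ ≤ 0, Λ̂ ⊙ X̂ = 0 and Π̂ ⊙ Ŷ = 0, then (X̂, Ŷ) is a KKT point of the problem min{‖P_Ω(XY − M)‖_F² : X ≥ 0, Y ≥ 0}; that is, there exist multipliers Λ' ≤ 0, Π' ≤ 0 with P_Ω(X̂Ŷ − M)Ŷ^T + Λ' = 0, X̂^T P_Ω(X̂Ŷ − M) + Π' = 0, Λ' ⊙ X̂ = 0, Π' ⊙ Ŷ = 0. -/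
open Matrix

theorem lifted_KKT_implies_original_KKT {m q n : ℕ} (Ω : Finset (Fin m × Fin n))
    (X Λ : Matrix (Fin m) (Fin q) ℝ)
    (Y Pm : Matrix (Fin q) (Fin n) ℝ)
    (Z M : Matrix (Fin m) (Fin n) ℝ)
    (h1 : (X * Y - Z) * Yᵀ + Λ = 0)
    (h2 : Xᵀ * (X * Y - Z) + Pm = 0)
    (h3 : projOmegaC Ω (X * Y - Z) = 0)
    (h4 : projOmega Ω (Z - M) = 0)
    (hX : ∀ i j, 0 ≤ X i j) (hY : ∀ i j, 0 ≤ Y i j)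
    (hΛ : ∀ i j, Λ i j ≤ 0) (hPm : ∀ i j, Pm i j ≤ 0)
    (hcs1 : ∀ i j, Λ i j * X i j = 0) (hcs2 : ∀ i j, Pm i j * Y i j = 0) :
    ∃ (Λ' : Matrix (Fin m) (Fin q) ℝ) (Pm' : Matrix (Fin q) (Fin n) ℝ),
      (∀ i j, Λ' i j ≤ 0) ∧ (∀ i j, Pm' i j ≤ 0) ∧
      projOmega Ω (X * Y - M) * Yᵀ + Λ' = 0 ∧
      Xᵀ * projOmega Ω (X * Y - M) + Pm' = 0 ∧
      (∀ i j, Λ' i j * X i j = 0) ∧ (∀ i j, Pm' i j * Y i j = 0) := by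
  have key : projOmega Ω (X * Y - M) = X * Y - Z := by
    funext i j
    have e3 := congrFun (congrFun h3 i) j
    have e4 := congrFun (congrFun h4 i) j
    simp only [projOmega, projOmegaC, Matrix.sub_apply, Matrix.zero_apply] at e3 e4 ⊢
    by_cases h : (i, j) ∈ Ω
    · simp [h] at e4 ⊢
      have : Z i j = M i j := by linarith
      linarith
    · simp [h] at e3 ⊢
      linarith
  exact ⟨Λ, Pm, hΛ, hPm, by rw [key]; exact h1, by rw [key]; exact h2, hcs1, hcs2⟩
end
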